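/- Let (m,n) be a coprime pair of positive integers and let D be an (m,n)-Dyck path with sorted rank sequence 𝔯_1<…<𝔯_{m+n}. Then area(D) = (1/(m+n)) · ( Σ_{i=1}^{m+n} 𝔯_i − C(m+n,2) ), where C(m+n,2) = (m+n)(m+n−1)/2. -/

import Mathlib

/-- The list of ranks of the lattice points visited by a path (excluding the final
point), starting from rank `r`.  A `true` entry is a north (`u`) step, which adds `m`
to the rank; a `false` entry is an east (`d`) step, which subtracts `n`. -/
def rankWalk (m n : ℤ) : List Bool → ℤ → List ℤ
  | [], _ => []
  | b :: bs, r => r :: rankWalk m n bs (r + if b then m else -n)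

/-- An `(m,n)`-path: a word of `n` north steps (`true`) and `m` east steps (`false`). -/
def IsPathWord (m n : ℕ) (P : List Bool) : Prop :=
  P.length = m + n ∧ P.count true = n

/-- An `(m,n)`-Dyck path: an `(m,n)`-path all of whose ranks are nonnegative. -/
def IsDyckWord (m n : ℕ) (P : List Bool) : Prop :=
  IsPathWord m n P ∧ ∀ r ∈ rankWalk (m : ℤ) (n : ℤ) P 0, 0 ≤ r

/-- The rank set of a path: the ranks of its `m+n` lattice points other than the endpoint. -/
def rankSet (m n : ℕ) (P : List Bool) : Finset ℤ :=
  (rankWalk (m : ℤ) (n : ℤ) P 0).toFinset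

/-- `R` is the rank set of some `(m,n)`-path. -/
def IsRankSet (m n : ℕ) (R : Finset ℤ) : Prop :=
  ∃ P : List Bool, IsPathWord m n P ∧ rankSet m n P = R

/-- `R` is the rank set of some `(m,n)`-Dyck path. -/
def IsDyckRankSet (m n : ℕ) (R : Finset ℤ) : Prop :=
  ∃ P : List Bool, IsDyckWord m n P ∧ rankSet m n P = R

/-- The lattice point of the path `P` reached after `i` steps. -/
def pathPt (P : List Bool) : ℕ → ℤ × ℤ
  | 0 => (0, 0)
  | i + 1 => pathPt P i + (if P.getD i false then (0, 1) else (1, 0))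

/- `area P` is the number of unit lattice squares lying to the right of the path `P`
and to the left of the diagonal `y = (n/m)x`: the square with lower-left corner
`(x, y)` is to the left of the diagonal iff its lower-right corner is weakly above
the diagonal, i.e. `n(x+1) ≤ my`, and it is to the right of the path iff the north
step of the path at height `y` starts at a point with first coordinate `≤ x`. -/
open Classical in

noncomputable def area (m n : ℕ) (P : List Bool) : ℕ :=
  ((Finset.range m ×ˢ Finset.range n).filter (fun q =>
      (n : ℤ) * (q.1 + 1) ≤ (m : ℤ) * q.2 ∧
      ∃ i < P.length, P.getD i false = true ∧
        (pathPt P i).2 = (q.2 : ℤ) ∧ (pathPt P i).1 ≤ (q.1 : ℤ))).card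

/-!
Write `hᵢ` for the height of the path after `i` steps and `T` for the set of indices of its
north steps; `i ↦ hᵢ` maps `T` bijectively onto `{0, …, n-1}`. The `i`-th lattice point has
rank `(m+n)hᵢ - n i`, and these ranks are distinct because `m+n` is prime to `n`, so the rank
sum is `(m+n) ∑ hᵢ - n (m+n choose 2)`. The squares of the area in row `y = hᵢ` (`i ∈ T`) are
those in columns `i - hᵢ ≤ x < ⌊m y / n⌋`, so `area = ∑_y ⌊m y / n⌋ - ∑_{i ∈ T} (i - hᵢ)`.
Finally `∑_y ⌊m y / n⌋ = (m-1)(n-1)/2` because `y ↦ m y mod n` permutes the residues mod `n`,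
and `∑ᵢ hᵢ + ∑_{i ∈ T} (i + 1) = (m+n) n` by counting pairs `j < i` with `j ∈ T`.
-/

open Finset

lemma sum_range_mul_mod_eq_sum_range {m n : ℕ} (hcop : Nat.Coprime m n) :
    ∑ y ∈ range n, m * y % n = ∑ y ∈ range n, y := by
  have hmaps : Set.MapsTo (fun y => m * y % n) (range n) (range n) := fun y hy =>
    mem_range.2 (Nat.mod_lt _ (by simp only [coe_range, Set.mem_Iio] at hy; omega))
  have hinj : Set.InjOn (fun y => m * y % n) (range n) := fun y hy z hz hyz => by
    have := Nat.ModEq.cancel_left_of_coprime hcop.symm hyz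
    rwa [Nat.ModEq, Nat.mod_eq_of_lt (mem_range.1 hy), Nat.mod_eq_of_lt (mem_range.1 hz)] at this
  exact sum_nbij _ hmaps hinj (surjOn_of_injOn_of_card_le _ hmaps hinj le_rfl) fun _ _ => rfl

lemma two_mul_sum_range_id (k : ℕ) : 2 * ∑ i ∈ range k, (i : ℤ) = k * (k - 1) := by
  induction k with
  | zero => simp
  | succ k ih => rw [sum_range_succ, mul_add, ih]; push_cast; ring

lemma two_mul_sum_range_mul_div {m n : ℕ} (hcop : Nat.Coprime m n) :
    2 * ∑ y ∈ range n, ((m * y / n : ℕ) : ℤ) = (m - 1) * (n - 1) := by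
  rcases Nat.eq_zero_or_pos n with rfl | hn
  · simp [(Nat.coprime_zero_right m).1 hcop]
  have hdiv : n * ∑ y ∈ range n, m * y / n + ∑ y ∈ range n, m * y % n = m * ∑ y ∈ range n, y := by
    rw [mul_sum, mul_sum, ← sum_add_distrib]
    exact sum_congr rfl fun y _ => Nat.div_add_mod (m * y) n
  rw [sum_range_mul_mod_eq_sum_range hcop] at hdiv
  have hdivZ : (n : ℤ) * ∑ y ∈ range n, ((m * y / n : ℕ) : ℤ) + ∑ y ∈ range n, (y : ℤ)
      = m * ∑ y ∈ range n, (y : ℤ) := by simpa using congrArg (Nat.cast : ℕ → ℤ) hdiv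
  refine mul_left_cancel₀ (Nat.cast_ne_zero.2 hn.ne') ?_
  linear_combination 2 * hdivZ + ((m : ℤ) - 1) * two_mul_sum_range_id n

lemma sum_range_sum_range_add_sum_range_mul (f : ℕ → ℕ) (L : ℕ) :
    ∑ i ∈ range L, ∑ j ∈ range i, f j + ∑ j ∈ range L, (j + 1) * f j
      = L * ∑ j ∈ range L, f j := by
  induction L with
  | zero => simp
  | succ L ih => simp only [sum_range_succ]; linear_combination ih

lemma injOn_range_add_mul_sub_mul {m n : ℕ} (hcop : Nat.Coprime m n) (h : ℕ → ℤ) :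
    Set.InjOn (fun i => ((m : ℤ) + n) * h i - n * i) (range (m + n)) := by
  intro i hi j hj hij
  simp only [coe_range, Set.mem_Iio] at hi hj hij
  have hdvd : ((m + n : ℕ) : ℤ) ∣ n * ((i : ℤ) - j) := ⟨h i - h j, by push_cast; linarith⟩
  have hcopZ : IsCoprime ((m + n : ℕ) : ℤ) n :=
    Nat.isCoprime_iff_coprime.2 (Nat.coprime_add_self_left.2 hcop)
  have := Int.eq_zero_of_abs_lt_dvd (hcopZ.dvd_of_dvd_mul_left hdvd) (by rw [abs_lt]; omega)
  omega

def height (P : List Bool) (i : ℕ) : ℕ := (P.take i).count true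

def northSteps (P : List Bool) : Finset ℕ :=
  (range P.length).filter fun i => P.getD i false = true

section Height

variable (P : List Bool)

lemma height_succ (i : ℕ) :
    height P (i + 1) = height P i + if P.getD i false then 1 else 0 := by
  unfold height
  rcases lt_or_ge i P.length with h | h
  · rw [List.take_add_one, List.getElem?_eq_getElem h, List.getD_eq_getElem _ _ h]
    cases P[i] <;> simp
  · rw [List.take_of_length_le (by omega), List.take_of_length_le h,
      List.getD_eq_default _ _ h]
    simp

lemma height_eq_sum (i : ℕ) :
    height P i = ∑ j ∈ range i, if P.getD j false then 1 else 0 := by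
  induction i with
  | zero => simp [height]
  | succ i ih => rw [sum_range_succ, height_succ, ih]

lemma height_monotone : Monotone (height P) :=
  monotone_nat_of_le_succ fun i => by rw [height_succ]; omega

lemma height_le (i : ℕ) : height P i ≤ i :=
  List.count_le_length.trans (by simp)

lemma height_length : height P P.length = P.count true := by
  rw [height, List.take_length]

lemma pathPt_eq (i : ℕ) : pathPt P i = ((i : ℤ) - height P i, (height P i : ℤ)) := by
  induction i with
  | zero => simp [pathPt, height]
  | succ i ih =>
    rw [pathPt, ih, height_succ]
    cases P.getD i false <;> simp [Prod.ext_iff]; ring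

variable {P}

lemma mem_northSteps {i : ℕ} : i ∈ northSteps P ↔ i < P.length ∧ P.getD i false = true := by
  simp [northSteps]

lemma height_succ_of_mem_northSteps {i : ℕ} (hi : i ∈ northSteps P) :
    height P (i + 1) = height P i + 1 := by
  rw [height_succ, if_pos (mem_northSteps.1 hi).2]

lemma height_lt_count_of_mem_northSteps {i : ℕ} (hi : i ∈ northSteps P) :
    height P i < P.count true := by
  have := height_monotone P (mem_northSteps.1 hi).1
  rw [height_succ_of_mem_northSteps hi, height_length] at this
  omega

variable (P)

lemma height_strictMonoOn : StrictMonoOn (height P) (northSteps P) := fun i hi j _ hij => by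
  have := height_monotone P (Nat.succ_le_of_lt hij)
  rw [height_succ_of_mem_northSteps hi] at this
  omega

lemma card_northSteps : #(northSteps P) = P.count true := by
  rw [northSteps, card_filter, ← height_eq_sum, height_length]

lemma image_height_northSteps : (northSteps P).image (height P) = range (P.count true) := by
  refine eq_of_subset_of_card_le (fun y hy => ?_) ?_
  · obtain ⟨i, hi, rfl⟩ := mem_image.1 hy
    exact mem_range.2 (height_lt_count_of_mem_northSteps hi)
  · rw [card_range, card_image_of_injOn (height_strictMonoOn P).injOn, card_northSteps]

lemma sum_northSteps_comp_height {M : Type*} [AddCommMonoid M] (f : ℕ → M) :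
    ∑ i ∈ northSteps P, f (height P i) = ∑ y ∈ range (P.count true), f y := by
  rw [← image_height_northSteps, sum_image (height_strictMonoOn P).injOn]

lemma sum_height_add_sum_northSteps :
    ∑ i ∈ range P.length, height P i + ∑ j ∈ northSteps P, (j + 1)
      = P.length * P.count true := by
  rw [← height_length, northSteps, sum_filter]
  simp_rw [height_eq_sum]
  rw [← sum_range_sum_range_add_sum_range_mul]
  exact congrArg _ (sum_congr rfl fun j _ => by split <;> simp)

lemma rankWalk_eq (m n r : ℤ) :
    rankWalk m n P r = (List.range P.length).map fun i => r + (m + n) * height P i - n * i := by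
  induction P generalizing r with
  | nil => simp [rankWalk]
  | cons b bs ih =>
    rw [rankWalk, ih]
    simp only [List.length_cons, List.range_succ_eq_map, List.map_cons, List.map_map]
    congr 1
    · simp [height]
    · refine List.map_congr_left fun i _ => ?_
      have hb : height (b :: bs) (i + 1) = height bs i + if b then 1 else 0 := by
        simp only [height, List.take_succ_cons, List.count_cons]
        cases b <;> simp
      simp only [Function.comp, hb]
      cases b <;> simp <;> ring

lemma rankSet_eq_image (m n : ℕ) :
    rankSet m n P = (range P.length).image fun i => ((m : ℤ) + n) * height P i - n * i := by
  ext r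
  simp [rankSet, rankWalk_eq]

end Height

lemma sum_rankSet {m n : ℕ} (hcop : Nat.Coprime m n) {P : List Bool} (hP : IsPathWord m n P) :
    ∑ r ∈ rankSet m n P, r = ∑ i ∈ range (m + n), (((m : ℤ) + n) * height P i - n * i) := by
  rw [rankSet_eq_image, hP.1, sum_image (injOn_range_add_mul_sub_mul hcop _)]

lemma exists_northStep_iff {P : List Bool} {i : ℕ} (hi : i ∈ northSteps P) (x : ℕ) :
    (∃ j < P.length, P.getD j false = true ∧
        (pathPt P j).2 = (height P i : ℤ) ∧ (pathPt P j).1 ≤ x) ↔ i - height P i ≤ x := by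
  simp only [pathPt_eq, Nat.cast_inj]
  have := height_le P i
  constructor
  · rintro ⟨j, hjlen, hj, hji, hjx⟩
    obtain rfl := (height_strictMonoOn P).injOn (mem_northSteps.2 ⟨hjlen, hj⟩) hi hji
    omega
  · exact fun hx => ⟨i, (mem_northSteps.1 hi).1, (mem_northSteps.1 hi).2, rfl, by omega⟩

lemma area_eq_sum_northSteps {m n : ℕ} {P : List Bool} (hP : P.count true = n) :
    area m n P = ∑ i ∈ northSteps P, (m * height P i / n - (i - height P i)) := by
  have hrows : range n = (northSteps P).image (height P) := by rw [image_height_northSteps, hP]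
  rw [area, card_filter, sum_product_right, hrows, sum_image (height_strictMonoOn P).injOn]
  refine sum_congr rfl fun i hi => ?_
  have hlt := hP ▸ height_lt_count_of_mem_northSteps hi
  have hfloor_le : m * height P i / n ≤ m := Nat.div_le_of_le_mul (by nlinarith)
  rw [← card_filter, ← Nat.card_Ico]
  congr 1
  ext x
  have hdiag : (n : ℤ) * (x + 1) ≤ m * height P i ↔ x + 1 ≤ m * height P i / n := by
    rw [Nat.le_div_iff_mul_le (by omega), mul_comm]
    exact_mod_cast Iff.rfl
  simp only [mem_filter, mem_range, mem_Ico, exists_northStep_iff hi, hdiag]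
  omega

lemma sub_height_le_of_isDyckWord {m n : ℕ} {P : List Bool} (hP : IsDyckWord m n P) {i : ℕ}
    (hi : i ∈ northSteps P) : i - height P i ≤ m * height P i / n := by
  have hn := hP.1.2 ▸ height_lt_count_of_mem_northSteps hi
  have hrank := hP.2 _ (by
    rw [rankWalk_eq]
    exact List.mem_map_of_mem (List.mem_range.2 (mem_northSteps.1 hi).1))
  have := height_le P i
  rw [Nat.le_div_iff_mul_le (by omega)]
  zify [this]
  nlinarith

lemma area_eq_of_isDyckWord {m n : ℕ} {P : List Bool} (hP : IsDyckWord m n P) :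
    (area m n P : ℤ) = ∑ y ∈ range n, ((m * y / n : ℕ) : ℤ)
      - ∑ i ∈ northSteps P, (i : ℤ) + ∑ y ∈ range n, (y : ℤ) := by
  have hfloor := sum_northSteps_comp_height P fun y => ((m * y / n : ℕ) : ℤ)
  have hheight := sum_northSteps_comp_height P fun y => (y : ℤ)
  rw [hP.1.2] at hfloor hheight
  rw [area_eq_sum_northSteps hP.1.2, Nat.cast_sum, ← hfloor, ← hheight]
  rw [sum_congr rfl fun i hi => by
    rw [Nat.cast_sub (sub_height_le_of_isDyckWord hP hi), Nat.cast_sub (height_le P i)]]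
  simp only [sum_sub_distrib]
  ring

theorem area_eq_sum_ranks_general (m n : ℕ)
    (hcop : Nat.Coprime m n) (P : List Bool) (hP : IsDyckWord m n P) :
    ((m : ℤ) + n) * area m n P =
      (∑ r ∈ rankSet m n P, r) - ((m + n).choose 2 : ℤ) := by
  have hheight : ∑ i ∈ range (m + n), (height P i : ℤ) + ∑ j ∈ northSteps P, (j : ℤ) + n
      = (m + n) * n := by
    have := sum_height_add_sum_northSteps P
    rw [sum_add_distrib, sum_const, card_northSteps, smul_eq_mul, mul_one, ← add_assoc, hP.1.1,
      hP.1.2] at this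
    simpa using congrArg (Nat.cast : ℕ → ℤ) this
  have hchoose : ((m + n).choose 2 : ℤ) = ∑ i ∈ range (m + n), (i : ℤ) := by
    rw [← Nat.cast_sum, sum_range_id, Nat.choose_two_right]
  rw [area_eq_of_isDyckWord hP, sum_rankSet hcop hP.1, sum_sub_distrib, ← mul_sum, ← mul_sum,
    hchoose]
  refine mul_left_cancel₀ (two_ne_zero : (2 : ℤ) ≠ 0) ?_
  have hid := two_mul_sum_range_id (m + n)
  push_cast at hid
  linear_combination ((m : ℤ) + n) * two_mul_sum_range_mul_div hcop
    + ((m : ℤ) + n) * two_mul_sum_range_id n - 2 * ((m : ℤ) + n) * hheight + ((n : ℤ) + 1) * hid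

/-- For an `(m,n)`-Dyck path `D` with sorted rank sequence
`𝔯_1 < ⋯ < 𝔯_{m+n}`, we have
`area(D) = (1/(m+n)) · (∑_{i=1}^{m+n} 𝔯_i - C(m+n, 2))`. -/
theorem area_eq_sum_ranks (m n : ℕ) (hm : 0 < m) (hn : 0 < n)
    (hcop : Nat.Coprime m n) (P : List Bool) (hP : IsDyckWord m n P) :
    ((m : ℤ) + n) * area m n P =
      (∑ r ∈ rankSet m n P, r) - ((m + n).choose 2 : ℤ) :=
  area_eq_sum_ranks_general m n hcop P hP
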